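/- arXiv:1803.02330 — 5 statements merged into one kernel-verified Lean document; each statement's English description precedes it below -/
import Mathlib

section
/- Let J ⊂ K[x_1,...,x_n] be a stable monomial ideal. Then the number of terms in the sous-escalier N(J) that lie in the colon ideal (J : x_n) equals the number of minimal monomial generators of J that are divisible by x_n. Precisely, |N(J) ∩ (J : x_n)| = |{τ ∈ B_J : x_n divides τ}|, where B_J is the minimal monomial basis of J and N(J) is the set of monomials not in J. -/
/-!
The map `β ↦ β · x_n` is a bijection from `N(J) ∩ (J : x_n)` onto the minimal generators
divisible by `x_n`, with inverse `α ↦ α / x_n`. The only nontrivial point is minimality of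
`β · x_n`. Let `γ ∈ J` divide it. If `x_n ∤ γ` then `γ ∣ β`, impossible. Otherwise, if
`γ / x_n` properly divides `β`, some `x_i` has `γ / x_n · x_i ∣ β`, and stability puts
`γ / x_n · x_i` in `J`, again forcing `β ∈ J`.
-/

open Finset

/-- Total degree of a monomial (exponent vector). -/
def mdeg {n : ℕ} (α : Fin n →₀ ℕ) : ℕ := α.sum fun _ e => e

/-- A set of exponent vectors is the set of monomials of a monomial ideal. -/
def IsMonIdeal {n : ℕ} (S : Set (Fin n →₀ ℕ)) : Prop :=
  ∀ α ∈ S, ∀ β : Fin n →₀ ℕ, α + β ∈ S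

/-- `α` is a minimal monomial generator of the monomial ideal with monomials `S`. -/
def MinGen {n : ℕ} (S : Set (Fin n →₀ ℕ)) (α : Fin n →₀ ℕ) : Prop :=
  α ∈ S ∧ ∀ β ∈ S, β ≤ α → β = α

/-- Stable monomial ideal (variables ordered `x_1 ≻ ⋯ ≻ x_n`, i.e. index `0` largest). -/
def IsStable {n : ℕ} (S : Set (Fin n →₀ ℕ)) : Prop :=
  ∀ α ∈ S, ∀ m ∈ α.support, (∀ k ∈ α.support, k ≤ m) →
    ∀ i : Fin n, i < m → α - Finsupp.single m 1 + Finsupp.single i 1 ∈ S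

def IsStronglyStable {n : ℕ} (S : Set (Fin n →₀ ℕ)) : Prop :=
  ∀ α ∈ S, ∀ i ∈ α.support, ∀ j : Fin n, j < i →
    α - Finsupp.single i 1 + Finsupp.single j 1 ∈ S

/-- `drlLT α β` : `α` is smaller than `β` in degrevlex with `x_1 ≻ ⋯ ≻ x_n`. -/
def drlLT {n : ℕ} (α β : Fin n →₀ ℕ) : Prop :=
  mdeg α < mdeg β ∨ (mdeg α = mdeg β ∧ ∃ i : Fin n, β i < α i ∧ ∀ j : Fin n, i < j → α j = β j)

def IsAlmostRevLex {n : ℕ} (S : Set (Fin n →₀ ℕ)) : Prop :=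
  IsMonIdeal S ∧ ∀ α, MinGen S α → ∀ β : Fin n →₀ ℕ, mdeg β = mdeg α → drlLT α β → β ∈ S

/-- Combinatorial Hilbert function of `R/J`: number of degree-`t` monomials outside `S`. -/
noncomputable def hilbC {n : ℕ} (S : Set (Fin n →₀ ℕ)) (t : ℕ) : ℕ :=
  {α : Fin n →₀ ℕ | mdeg α = t ∧ α ∉ S}.ncard

/-- `fdiff H s t` is `Δ^s H (t)` with the convention `Δ^s H (0) = 1` for `s ≥ 1`. -/
def fdiff (H : ℕ → ℕ) : ℕ → ℕ → ℤ
  | 0, t => H t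
  | _+1, 0 => 1
  | s+1, t+1 => fdiff H s (t+1) - fdiff H s t

open Finsupp

theorem sub_single_one_add_single_one {n : ℕ} {α : Fin n →₀ ℕ} {i : Fin n} (hi : α i ≠ 0) :
    α - single i 1 + single i 1 = α :=
  tsub_add_cancel_of_le (single_le_iff.mpr (Nat.one_le_iff_ne_zero.mpr hi))

theorem IsMonIdeal.mem_of_le {n : ℕ} {S : Set (Fin n →₀ ℕ)} (hmon : IsMonIdeal S)
    {γ β : Fin n →₀ ℕ} (hγ : γ ∈ S) (hle : γ ≤ β) : β ∈ S := by
  simpa [add_tsub_cancel_of_le hle] using hmon γ hγ (β - γ)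

theorem MinGen.sub_single_notMem {n : ℕ} {S : Set (Fin n →₀ ℕ)} {α : Fin n →₀ ℕ}
    (hα : MinGen S α) {i : Fin n} (hi : α i ≠ 0) : α - single i 1 ∉ S := by
  intro hmem
  have hi' := DFunLike.congr_fun (hα.2 _ hmem tsub_le_self) i
  simp only [tsub_apply, single_eq_same] at hi'
  omega

theorem IsStable.sub_single_last_add_single_mem {n : ℕ} {S : Set (Fin (n + 1) →₀ ℕ)}
    (hS : IsStable S) {γ : Fin (n + 1) →₀ ℕ} (hγ : γ ∈ S) (hlast : γ (Fin.last n) ≠ 0)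
    (i : Fin (n + 1)) : γ - single (Fin.last n) 1 + single i 1 ∈ S := by
  rcases (Fin.le_last i).lt_or_eq with hi | rfl
  · exact hS γ hγ _ (mem_support_iff.mpr hlast) (fun k _ => Fin.le_last k) i hi
  · rwa [sub_single_one_add_single_one hlast]

theorem exists_add_single_le_of_lt {n : ℕ} {δ β : Fin n →₀ ℕ} (hlt : δ < β) :
    ∃ i, δ + single i 1 ≤ β := by
  obtain ⟨i, hi⟩ : ∃ i, δ i < β i := by
    by_contra! h
    exact hlt.not_ge (le_def.mpr h)
  refine ⟨i, (le_tsub_iff_left hlt.le).mp (single_le_iff.mpr ?_)⟩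
  simp only [tsub_apply]
  omega

theorem minGen_add_single_last {n : ℕ} {S : Set (Fin (n + 1) →₀ ℕ)} (hmon : IsMonIdeal S)
    (hS : IsStable S) {β : Fin (n + 1) →₀ ℕ} (hβ : β ∉ S)
    (hβe : β + single (Fin.last n) 1 ∈ S) : MinGen S (β + single (Fin.last n) 1) := by
  refine ⟨hβe, fun γ hγ hle => ?_⟩
  set δ := γ - single (Fin.last n) 1
  have hδ : δ ≤ β := tsub_le_iff_right.mpr hle
  by_cases hlast : γ (Fin.last n) = 0
  · have hγδ : γ = δ := by
      ext k
      rcases eq_or_ne k (Fin.last n) with rfl | hk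
      · simp [δ, hlast]
      · simp [δ, single_eq_of_ne' hk.symm]
    exact (hβ (hmon.mem_of_le hγ (hγδ ▸ hδ))).elim
  have hγ_eq : γ = δ + single (Fin.last n) 1 := (sub_single_one_add_single_one hlast).symm
  by_contra hne
  obtain ⟨i, hi⟩ := exists_add_single_le_of_lt (hδ.lt_of_ne fun h => hne (h ▸ hγ_eq))
  exact hβ (hmon.mem_of_le (hS.sub_single_last_add_single_mem hγ hlast i) hi)

/-- For a stable monomial ideal `J` (in `n+1` variables `x_1 ≻ ⋯ ≻ x_{n+1}`), the number of
monomials in the sous-escalier `N(J)` lying in `(J : x_{n+1})` equals the number of minimal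
generators of `J` divisible by the last variable. -/
theorem ncard_sousEscalier_colon_eq_ncard_minGen_divisible {n : ℕ}
    (S : Set (Fin (n + 1) →₀ ℕ)) (hmon : IsMonIdeal S) (hS : IsStable S) :
    {β : Fin (n + 1) →₀ ℕ | β ∉ S ∧ β + Finsupp.single (Fin.last n) 1 ∈ S}.ncard =
      {α : Fin (n + 1) →₀ ℕ | MinGen S α ∧ α (Fin.last n) ≠ 0}.ncard := by
  set e : Fin (n + 1) →₀ ℕ := single (Fin.last n) 1
  have himage : (· + e) '' {β | β ∉ S ∧ β + e ∈ S} =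
      {α | MinGen S α ∧ α (Fin.last n) ≠ 0} := by
    ext α
    constructor
    · rintro ⟨β, ⟨hβ, hβe⟩, rfl⟩
      exact ⟨minGen_add_single_last hmon hS hβ hβe, by simp [e]⟩
    · rintro ⟨hα, hlast⟩
      have hsub : α - e + e = α := sub_single_one_add_single_one hlast
      exact ⟨α - e, ⟨hα.sub_single_notMem hlast, by rw [hsub]; exact hα.1⟩, hsub⟩
  rw [← himage, Set.ncard_image_of_injective _ (add_left_injective e)]
end

section
/- A monomial x^β lies in N(J) ∩ (J : x_n) if and only if x_n·x^β is a minimal monomial generator of J, for any stable monomial ideal J ⊂ K[x_1,...,x_n]. -/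
open Finset

/-- For a stable monomial ideal `J`, a monomial `x^β` lies in `N(J) ∩ (J : x_n)` if and only if
`x_n·x^β` is a minimal generator of `J` (here `x_n` is the last, smallest, variable). -/
theorem mem_sousEscalier_colon_iff_minGen {n : ℕ}
    (S : Set (Fin (n + 1) →₀ ℕ)) (hmon : IsMonIdeal S) (hS : IsStable S)
    (β : Fin (n + 1) →₀ ℕ) :
    (β ∉ S ∧ β + Finsupp.single (Fin.last n) 1 ∈ S) ↔
      MinGen S (β + Finsupp.single (Fin.last n) 1) := by
  constructor
  · rintro ⟨hβ, hβe⟩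
    refine ⟨hβe, fun γ hγ hle => ?_⟩
    by_contra hne
    have hle' : ∀ j, γ j ≤ β j + (Finsupp.single (Fin.last n) 1 : Fin (n+1) →₀ ℕ) j := by
      intro j
      have := Finsupp.le_def.mp hle j
      simpa using this
    by_cases hlast : γ (Fin.last n) ≤ β (Fin.last n)
    · have hγβ : γ ≤ β := by
        rw [Finsupp.le_def]; intro j
        by_cases hj : j = Fin.last n
        · subst hj; exact hlast
        · have := hle' j
          simpa [Finsupp.single_apply, Ne.symm hj] using this
      have : β ∈ S := by
        have := hmon γ hγ (β - γ)
        rwa [add_tsub_cancel_of_le hγβ] at this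
      exact hβ this
    · have hlast' : γ (Fin.last n) = β (Fin.last n) + 1 := by
        have := hle' (Fin.last n)
        simp [Finsupp.single_apply] at this
        omega
      have hex : ∃ i, γ i < β i ∧ i ≠ Fin.last n := by
        by_contra h
        push_neg at h
        apply hne
        ext j
        by_cases hj : j = Fin.last n
        · subst hj; simp [hlast']
        · have h1 := hle' j
          have h2 := h j
          simp [Finsupp.single_apply, Ne.symm hj] at h1 ⊢
          omega
      obtain ⟨i, hi, hine⟩ := hex
      have hilt : i < Fin.last n := lt_of_le_of_ne (Fin.le_last i) hine
      have hsupp : Fin.last n ∈ γ.support := by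
        rw [Finsupp.mem_support_iff, hlast']
        omega
      have hγ' := hS γ hγ (Fin.last n) hsupp (fun k _ => Fin.le_last k) i hilt
      have hγ'β : γ - Finsupp.single (Fin.last n) 1 + Finsupp.single i 1 ≤ β := by
        rw [Finsupp.le_def]; intro j
        rw [Finsupp.add_apply, Finsupp.tsub_apply]
        by_cases hj : j = Fin.last n
        · subst hj
          simp [Finsupp.single_apply, hlast', Ne.symm hine]
        · by_cases hji : j = i
          · subst hji
            simp [Finsupp.single_apply, Ne.symm hj]
            omega
          · have := hle' j
            simp [Finsupp.single_apply, Ne.symm hj, Ne.symm hji] at this ⊢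
            omega
      have : β ∈ S := by
        have := hmon _ hγ' (β - (γ - Finsupp.single (Fin.last n) 1 + Finsupp.single i 1))
        rwa [add_tsub_cancel_of_le hγ'β] at this
      exact hβ this
  · rintro ⟨hmem, hmin⟩
    refine ⟨?_, hmem⟩
    intro hβ
    have h := hmin β hβ (self_le_add_right β _)
    have := congrArg (fun f : Fin (n+1) →₀ ℕ => f (Fin.last n)) h
    simp at this
end

section
/- Let J be a stable monomial ideal in K[x_1,...,x_n] and t an integer. Then the first expansion E(N(J)_t) := T_{t+1} \ ({x_1,...,x_n}·J_t) is the disjoint union over i = 0,...,n-1 of the sets x_{n-i}·{τ ∈ N(J)_t : min(τ) ⪰ x_{n-i}}; in particular these sets are pairwise disjoint and their union equals E(N(J)_t). -/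
open Finset

lemma mdeg_add' {n : ℕ} (α β : Fin n →₀ ℕ) : mdeg (α + β) = mdeg α + mdeg β := by
  simp [mdeg, Finsupp.sum_add_index']

lemma mdeg_single' {n : ℕ} (i : Fin n) (e : ℕ) : mdeg (Finsupp.single i e) = e := by
  simp [mdeg, Finsupp.sum_single_index]

/-- For a stable monomial ideal `J` in `n+1` variables and any degree `t`, the first expansion
`E(N(J)_t) = T_{t+1} \ ({x_1,…,x_{n+1}}·J_t)` is the disjoint union, over the variables `v`,
of the sets `x_v · {τ ∈ N(J)_t : min(τ) ⪰ x_v}` (recall `x_1 ≻ ⋯ ≻ x_{n+1}`, index `0`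
being the largest variable, so `min(τ) ⪰ x_v` means every variable in the support of `τ`
has index `≤ v`). -/
theorem firstExpansion_eq_disjoint_union {n : ℕ}
    (S : Set (Fin (n + 1) →₀ ℕ)) (hmon : IsMonIdeal S) (hS : IsStable S) (t : ℕ) :
    ({γ : Fin (n + 1) →₀ ℕ | mdeg γ = t + 1 ∧
        γ ∉ ⋃ i : Fin (n + 1), (fun α => α + Finsupp.single i 1) ''
          {α : Fin (n + 1) →₀ ℕ | mdeg α = t ∧ α ∈ S}} =
      ⋃ v : Fin (n + 1), (fun τ => τ + Finsupp.single v 1) ''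
        {τ : Fin (n + 1) →₀ ℕ | mdeg τ = t ∧ τ ∉ S ∧ ∀ k ∈ τ.support, k ≤ v}) ∧
    (∀ v w : Fin (n + 1), v ≠ w →
      Disjoint ((fun τ => τ + Finsupp.single v 1) ''
          {τ : Fin (n + 1) →₀ ℕ | mdeg τ = t ∧ τ ∉ S ∧ ∀ k ∈ τ.support, k ≤ v})
        ((fun τ => τ + Finsupp.single w 1) ''
          {τ : Fin (n + 1) →₀ ℕ | mdeg τ = t ∧ τ ∉ S ∧ ∀ k ∈ τ.support, k ≤ w})) := by
  constructor
  · ext γ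
    simp only [Set.mem_setOf_eq, Set.mem_iUnion, Set.mem_image]
    constructor
    · rintro ⟨hdeg, hnot⟩
      push_neg at hnot
      have hne : γ ≠ 0 := by
        intro h; rw [h] at hdeg; simp [mdeg] at hdeg
      have hsupp : γ.support.Nonempty := Finsupp.support_nonempty_iff.mpr hne
      set v := γ.support.max' hsupp with hv
      have hvmem : v ∈ γ.support := γ.support.max'_mem hsupp
      have hvmax : ∀ k ∈ γ.support, k ≤ v := fun k hk => γ.support.le_max' k hk
      have hγv : 1 ≤ γ v := Nat.one_le_iff_ne_zero.mpr (Finsupp.mem_support_iff.mp hvmem)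
      have hadd : γ - Finsupp.single v 1 + Finsupp.single v 1 = γ := by
        ext j
        by_cases h : j = v
        · subst h
          simp only [Finsupp.add_apply, Finsupp.tsub_apply, Finsupp.single_eq_same]
          omega
        · simp [Finsupp.add_apply, Finsupp.tsub_apply, Finsupp.single_apply, Ne.symm h]
      have hdτ : mdeg (γ - Finsupp.single v 1) = t := by
        have := mdeg_add' (γ - Finsupp.single v 1) (Finsupp.single v 1)
        rw [hadd, hdeg, mdeg_single'] at this
        omega
      refine ⟨v, γ - Finsupp.single v 1, ⟨hdτ, ?_, ?_⟩, hadd⟩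
      · intro hmem
        exact hnot v (γ - Finsupp.single v 1) ⟨hdτ, hmem⟩ hadd
      · intro k hk
        apply hvmax
        rw [Finsupp.mem_support_iff] at hk ⊢
        intro h
        apply hk
        rw [Finsupp.tsub_apply, h]
        simp
    · rintro ⟨v, τ, ⟨hd, hτS, hsup⟩, rfl⟩
      refine ⟨by rw [mdeg_add', hd, mdeg_single'], ?_⟩
      rintro hmem
      obtain ⟨i, α, ⟨hαd, hαS⟩, heq⟩ := hmem
      by_cases hiv : i = v
      · subst hiv
        have : α = τ := add_right_cancel heq
        exact hτS (this ▸ hαS)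
      · have hco : ∀ j : Fin (n+1), α j + (Finsupp.single i 1) j = τ j + (Finsupp.single v 1) j := by
          intro j
          have := DFunLike.congr_fun heq j
          simpa [Finsupp.add_apply] using this
        have hτi : 1 ≤ τ i := by
          have := hco i
          simp [Finsupp.single_apply, Ne.symm, hiv] at this
          omega
        have hilev : i < v := lt_of_le_of_ne (hsup i (Finsupp.mem_support_iff.mpr (by omega))) hiv
        have hαv : α v = τ v + 1 := by
          have := hco v
          simpa [Finsupp.single_apply, hiv] using this
        have hvmemα : v ∈ α.support := Finsupp.mem_support_iff.mpr (by omega)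
        have hmax : ∀ k ∈ α.support, k ≤ v := by
          intro k hk
          by_cases hkv : k = v
          · exact hkv.le
          · by_cases hki : k = i
            · exact hki ▸ hilev.le
            · have h1 := hco k
              rw [Finsupp.single_apply, Finsupp.single_apply,
                if_neg (fun h : i = k => hki h.symm),
                if_neg (fun h : v = k => hkv h.symm)] at h1
              apply hsup
              rw [Finsupp.mem_support_iff] at hk ⊢
              omega
        have hSτ := hS α hαS v hvmemα hmax i hilev
        have hτeq : α - Finsupp.single v 1 + Finsupp.single i 1 = τ := by
          ext j
          have h1 := hco j
          rw [Finsupp.single_apply, Finsupp.single_apply] at h1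
          simp only [Finsupp.add_apply, Finsupp.tsub_apply, Finsupp.single_apply]
          by_cases hjv : j = v
          · subst hjv
            rw [if_pos rfl, if_neg hiv] at h1 ⊢
            omega
          · rw [if_neg (fun h : v = j => hjv h.symm)] at h1 ⊢
            by_cases hji : j = i
            · subst hji
              rw [if_pos rfl] at h1 ⊢
              omega
            · rw [if_neg (fun h : i = j => hji h.symm)] at h1 ⊢
              omega
        rw [hτeq] at hSτ
        exact hτS hSτ
  · intro v w hvw
    rw [Set.disjoint_left]
    rintro γ ⟨τ, ⟨_, _, hτ⟩, rfl⟩ ⟨σ, ⟨_, _, hσ⟩, heq⟩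
    have hco : ∀ j : Fin (n+1), σ j + (Finsupp.single w 1) j = τ j + (Finsupp.single v 1) j := by
      intro j
      have := DFunLike.congr_fun heq j
      simpa [Finsupp.add_apply] using this
    rcases lt_or_gt_of_ne hvw with h | h
    · have hτw : τ w = 0 := by
        by_contra hc
        exact absurd (hτ w (Finsupp.mem_support_iff.mpr hc)) (not_le.mpr h)
      have := hco w
      simp only [Finsupp.single_apply, hτw] at this
      simp [hvw] at this
    · have hσv : σ v = 0 := by
        by_contra hc
        exact absurd (hσ v (Finsupp.mem_support_iff.mpr hc)) (not_le.mpr h)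
      have := hco v
      simp only [Finsupp.single_apply, hσv] at this
      simp [Ne.symm hvw] at this
end

section
/- If J ⊂ K[x_1,...,x_{n-1}] is an almost revlex ideal, then the extension ideal J·K[x_1,...,x_n] is also an almost revlex ideal. -/
open Finset

/-- Restriction of a monomial in `n+1` variables to the first `n` variables. -/
noncomputable def restrictFront {n : ℕ} (β : Fin (n + 1) →₀ ℕ) : Fin n →₀ ℕ :=
  Finsupp.comapDomain Fin.castSucc β (Fin.castSucc_injective n).injOn

/-!
A minimal generator `β` of the extension does not involve `x_{n+1}` and restricts to a minimal
generator of `J`. If `γ` has the same degree and `β ≺ γ` in degrevlex, the last index where they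
differ is one where `γ` has the smaller exponent; it cannot be `x_{n+1}`, whose exponent in `β`
is `0`. So `γ` does not involve `x_{n+1}` either, and its restriction lies above that of `β`,
hence in `J`.
-/

lemma mdeg_eq_sum {n : ℕ} (α : Fin n →₀ ℕ) : mdeg α = ∑ i, α i := by
  rw [mdeg, Finsupp.sum_fintype]
  intro
  rfl

section restrictFront

variable {n : ℕ}

lemma restrictFront_apply (β : Fin (n + 1) →₀ ℕ) (i : Fin n) :
    restrictFront β i = β i.castSucc := rfl

lemma restrictFront_add (β γ : Fin (n + 1) →₀ ℕ) :
    restrictFront (β + γ) = restrictFront β + restrictFront γ := by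
  ext i
  simp [restrictFront_apply]

lemma mdeg_eq_mdeg_restrictFront_add (β : Fin (n + 1) →₀ ℕ) :
    mdeg β = mdeg (restrictFront β) + β (Fin.last n) := by
  simp [mdeg_eq_sum, Fin.sum_univ_castSucc, restrictFront_apply]

lemma restrictFront_embDomain (α : Fin n →₀ ℕ) :
    restrictFront (α.embDomain Fin.castSuccEmb) = α := by
  ext i
  exact Finsupp.embDomain_apply_self Fin.castSuccEmb α i

lemma embDomain_castSuccEmb_last (α : Fin n →₀ ℕ) :
    α.embDomain Fin.castSuccEmb (Fin.last n) = 0 :=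
  Finsupp.embDomain_of_notMem_range _ _ _ fun ⟨i, hi⟩ => (Fin.castSucc_lt_last i).ne hi

lemma embDomain_castSuccEmb_le {α : Fin n →₀ ℕ} {β : Fin (n + 1) →₀ ℕ}
    (h : α ≤ restrictFront β) : α.embDomain Fin.castSuccEmb ≤ β := by
  intro i
  induction i using Fin.lastCases with
  | last => simp [embDomain_castSuccEmb_last]
  | cast j => exact (Finsupp.embDomain_apply_self Fin.castSuccEmb α j).trans_le (h j)

lemma IsMonIdeal.preimage_restrictFront {S : Set (Fin n →₀ ℕ)} (hS : IsMonIdeal S) :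
    IsMonIdeal (restrictFront ⁻¹' S) := fun β hβ γ => by
  simpa only [Set.mem_preimage, restrictFront_add] using hS _ hβ _

namespace MinGen

variable {S : Set (Fin n →₀ ℕ)} {β : Fin (n + 1) →₀ ℕ}

lemma embDomain_restrictFront (hβ : MinGen (restrictFront ⁻¹' S) β) :
    (restrictFront β).embDomain Fin.castSuccEmb = β :=
  hβ.2 _ (by simpa [restrictFront_embDomain] using hβ.1) (embDomain_castSuccEmb_le le_rfl)

lemma last_eq_zero (hβ : MinGen (restrictFront ⁻¹' S) β) : β (Fin.last n) = 0 := by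
  rw [← hβ.embDomain_restrictFront, embDomain_castSuccEmb_last]

lemma restrictFront (hβ : MinGen (restrictFront ⁻¹' S) β) : MinGen S (restrictFront β) := by
  refine ⟨hβ.1, fun α hαS hαβ => ?_⟩
  have hα : α.embDomain Fin.castSuccEmb = β :=
    hβ.2 _ (by simpa [restrictFront_embDomain] using hαS) (embDomain_castSuccEmb_le hαβ)
  rw [← hα, restrictFront_embDomain]

end MinGen

lemma ne_last_of_lt_of_last_eq_zero {β γ : Fin (n + 1) →₀ ℕ} {i : Fin (n + 1)}
    (hβ : β (Fin.last n) = 0) (hi : γ i < β i) : i ≠ Fin.last n := by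
  rintro rfl
  omega

lemma last_eq_zero_of_drlLT {β γ : Fin (n + 1) →₀ ℕ} (hβ : β (Fin.last n) = 0)
    (hdeg : mdeg γ = mdeg β) (h : drlLT β γ) : γ (Fin.last n) = 0 := by
  obtain h | ⟨-, i, hi, hafter⟩ := h
  · omega
  · rw [← hafter _ (Fin.lt_last_iff_ne_last.2 (ne_last_of_lt_of_last_eq_zero hβ hi)), hβ]

lemma drlLT_restrictFront {β γ : Fin (n + 1) →₀ ℕ} (hβ : β (Fin.last n) = 0)
    (hγ : γ (Fin.last n) = 0) (h : drlLT β γ) : drlLT (restrictFront β) (restrictFront γ) := by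
  have hdegβ := mdeg_eq_mdeg_restrictFront_add β
  have hdegγ := mdeg_eq_mdeg_restrictFront_add γ
  obtain h | ⟨hdeg, i, hi, hafter⟩ := h
  · left
    omega
  · right
    obtain ⟨i, rfl⟩ := Fin.exists_castSucc_eq.2 (ne_last_of_lt_of_last_eq_zero hβ hi)
    exact ⟨by omega, i, hi, fun j hj => hafter j.castSucc (Fin.castSucc_lt_castSucc_iff.2 hj)⟩

end restrictFront

/-- The monomials of `J·K[x_1,…,x_{n+1}]` are exactly those whose restriction to the first `n`
variables lies in `J`. -/
theorem extension_isAlmostRevLex {n : ℕ}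
    (S : Set (Fin n →₀ ℕ)) (hS : IsAlmostRevLex S) :
    IsAlmostRevLex {β : Fin (n + 1) →₀ ℕ | restrictFront β ∈ S} := by
  obtain ⟨hMonIdeal, hAlmostRevLex⟩ := hS
  refine ⟨hMonIdeal.preimage_restrictFront, fun β hβ γ hdeg hlt => ?_⟩
  have hβ₀ := hβ.last_eq_zero
  have hγ₀ := last_eq_zero_of_drlLT hβ₀ hdeg hlt
  refine hAlmostRevLex _ hβ.restrictFront _ ?_ (drlLT_restrictFront hβ₀ hγ₀ hlt)
  have := mdeg_eq_mdeg_restrictFront_add β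
  have := mdeg_eq_mdeg_restrictFront_add γ
  omega
end

section
/- Let J ⊂ K[x_1,...,x_n] be an Artinian almost revlex ideal with Hilbert function H of R/J, and let r_1 = min{t : x_{n-1}^{t+1} ∈ J} be the first reduction number. Then for every t ≤ r_1, the variable x_n is not a zero-divisor on (R/J)_t, and consequently the Hilbert function of R/(J+(x_n)) equals the first difference ΔH(t) = H(t) - H(t-1) for all t ≤ r_1. -/
open Finset

open MvPolynomial

/-- Hilbert function of `R/I` at degree `t`. -/
noncomputable def hilbQ (K : Type*) [Field K] (n : ℕ)
    (I : Ideal (MvPolynomial (Fin n) K)) (t : ℕ) : ℕ :=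
  Module.finrank K (Submodule.map (Ideal.Quotient.mkₐ K I).toLinearMap
    (homogeneousSubmodule (Fin n) K t))

/-! If `α` is a standard monomial of `J` with `x_n · α ∈ J`, a minimal generator `β` of `J`
dividing `x_n · α` involves `x_n`, so it is degrevlex-smaller than `x_{n-1}^{deg β}`, and almost
revlexness gives `x_{n-1}^{deg α + 1} ∈ J`, i.e. `deg α ≥ r_1`. Hence below degree `r_1`
multiplication by `x_n` sends standard monomials to standard monomials. This is the
nonzerodivisor statement, and it splits the degree-`t` standard monomials of `J` into those of
`J + (x_n)` and `x_n` times all those of degree `t - 1`. Both ideals are monomial, so their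
Hilbert functions count standard monomials. -/

lemma mdeg_eq_degree {n : ℕ} (α : Fin n →₀ ℕ) : mdeg α = α.degree := rfl

lemma mdeg_of_mem_support {R : Type*} [CommSemiring R] {n t : ℕ} {g : MvPolynomial (Fin n) R}
    (hg : g ∈ homogeneousSubmodule (Fin n) R t) {m : Fin n →₀ ℕ} (hm : m ∈ g.support) :
    mdeg m = t := by
  rw [mdeg_eq_degree, Finsupp.degree_eq_weight_one]
  exact hg (mem_support_iff.mp hm)

lemma exists_minGen_le {n : ℕ} {S : Set (Fin n →₀ ℕ)} {α : Fin n →₀ ℕ} (hα : α ∈ S) :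
    ∃ β, MinGen S β ∧ β ≤ α := by
  obtain ⟨β, hβ, hmin⟩ := ((Set.finite_Iic α).subset fun β (hβ : β ∈ S ∧ β ≤ α) => hβ.2
    ).exists_minimalFor id {β | β ∈ S ∧ β ≤ α} ⟨α, hα, le_rfl⟩
  exact ⟨β, ⟨hβ.1, fun γ hγ hle => le_antisymm hle (hmin ⟨hγ, hle.trans hβ.2⟩ hle)⟩, hβ.2⟩

namespace IsMonIdeal

variable {n : ℕ} {S : Set (Fin n →₀ ℕ)}

lemma isUpperSet (hS : IsMonIdeal S) : IsUpperSet S := fun α β hαβ hα => by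
  simpa [add_tsub_cancel_of_le hαβ] using hS α hα (β - α)

lemma union (hS : IsMonIdeal S) {T : Set (Fin n →₀ ℕ)} (hT : IsMonIdeal T) :
    IsMonIdeal (S ∪ T) := by
  rintro α (hα | hα) β
  exacts [Or.inl (hS α hα β), Or.inr (hT α hα β)]

lemma setOf_pos (l : Fin n) : IsMonIdeal {α : Fin n →₀ ℕ | 0 < α l} :=
  fun α (hα : 0 < α l) β => show 0 < α l + β l by omega

lemma span_monomial_eq (R : Type*) [CommSemiring R] (hS : IsMonIdeal S) :
    Ideal.span ((fun α => monomial α (1 : R)) '' S) = restrictSupportIdeal R S hS.isUpperSet := by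
  ext f
  rw [mem_ideal_span_monomial_image]
  change _ ↔ ↑f.support ⊆ S
  exact ⟨fun h m hm => (h m hm).elim fun s hs => hS.isUpperSet hs.2 hs.1,
    fun h m hm => ⟨m, h hm, le_rfl⟩⟩

lemma mem_of_X_mul_mem {R : Type*} [CommSemiring R] (hS : IsMonIdeal S) {l : Fin n}
    {g : MvPolynomial (Fin n) R} (hg : ∀ m ∈ g.support, m + Finsupp.single l 1 ∈ S → m ∈ S)
    (hXg : X l * g ∈ Ideal.span ((fun α => monomial α (1 : R)) '' S)) :
    g ∈ Ideal.span ((fun α => monomial α (1 : R)) '' S) := by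
  rw [hS.span_monomial_eq R] at hXg ⊢
  intro m (hm : m ∈ g.support)
  refine hg m hm (hXg (show m + Finsupp.single l 1 ∈ (X l * g).support from ?_))
  rw [mem_support_iff, add_comm, coeff_X_mul]
  exact mem_support_iff.mp hm

end IsMonIdeal

lemma span_monomial_sup_span_X {R : Type*} [CommSemiring R] {n : ℕ} (S : Set (Fin n →₀ ℕ))
    (l : Fin n) :
    Ideal.span ((fun α => monomial α (1 : R)) '' S) ⊔ Ideal.span {X l} =
      Ideal.span ((fun α => monomial α (1 : R)) '' (S ∪ {α | 0 < α l})) := by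
  apply le_antisymm
  · refine sup_le (Ideal.span_mono (Set.image_mono Set.subset_union_left)) ?_
    rw [Ideal.span_singleton_le_iff_mem]
    exact Ideal.subset_span ⟨Finsupp.single l 1, Or.inr (by simp), rfl⟩
  · rw [Ideal.span_le]
    rintro _ ⟨α, hα | hα, rfl⟩
    · exact Ideal.mem_sup_left (Ideal.subset_span ⟨α, hα, rfl⟩)
    · refine Ideal.mem_sup_right (Ideal.mem_span_singleton.mpr ?_)
      exact (monomial_dvd_monomial (r := (1 : R))).mpr
        ⟨Or.inr (Finsupp.single_le_iff.mpr hα), one_dvd _⟩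

theorem hilbQ_span_monomial (K : Type*) [Field K] {n : ℕ} {S : Set (Fin n →₀ ℕ)}
    (hS : IsMonIdeal S) (t : ℕ) :
    hilbQ K n (Ideal.span ((fun α => monomial α (1 : K)) '' S)) t = hilbC S t := by
  set std := {α : Fin n →₀ ℕ | mdeg α = t ∧ α ∉ S}
  set Q := (Ideal.Quotient.mkₐ K (restrictSupportIdeal K S hS.isUpperSet)).toLinearMap
  have hker : LinearMap.ker Q = restrictSupport K S := by
    ext f
    exact LinearMap.mem_ker.trans Ideal.Quotient.eq_zero_iff_mem
  have hmap : (homogeneousSubmodule (Fin n) K t).map Q = (restrictSupport K std).map Q := by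
    rw [homogeneousSubmodule_eq_finsupp_supported]
    refine le_antisymm ?_ (Submodule.map_mono (restrictSupport_mono K fun α (h : α ∈ std) => h.1))
    have hsplit : {α : Fin n →₀ ℕ | mdeg α = t} ⊆ std ∪ S := fun α hα => by
      by_cases h : α ∈ S
      exacts [Or.inr h, Or.inl ⟨hα, h⟩]
    calc (restrictSupport K {α | mdeg α = t}).map Q
        ≤ (restrictSupport K std ⊔ restrictSupport K S).map Q :=
          Submodule.map_mono <| (restrictSupport_mono K hsplit).trans_eq <| by
            simp only [restrictSupport_eq_span, Set.image_union, Submodule.span_union]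
      _ = (restrictSupport K std).map Q := by
          rw [Submodule.map_sup, (LinearMap.le_ker_iff_map).mp hker.ge, sup_bot_eq]
  have hdisj : Disjoint (restrictSupport K std) (LinearMap.ker Q) := by
    rw [hker, Submodule.disjoint_def]
    intro f hfstd hfS
    rw [← support_eq_empty, ← Finset.coe_eq_empty, Set.eq_empty_iff_forall_notMem]
    exact fun m hm => (hfstd hm).2 (hfS hm)
  rw [hilbQ, hS.span_monomial_eq K, hmap, ← LinearMap.range_domRestrict,
    LinearMap.finrank_range_of_inj (LinearMap.injective_domRestrict_iff.mpr hdisj),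
    Module.finrank_eq_nat_card_basis (basisRestrictSupport K std), Nat.card_coe_set_eq, hilbC]

lemma hilbC_eq_hilbC_union_add_ncard {n : ℕ} (S : Set (Fin n →₀ ℕ)) (l : Fin n) (t : ℕ) :
    hilbC S t = hilbC (S ∪ {α | 0 < α l}) t +
      {β : Fin n →₀ ℕ | mdeg β + 1 = t ∧ β + Finsupp.single l 1 ∉ S}.ncard := by
  set B := {β : Fin n →₀ ℕ | mdeg β + 1 = t ∧ β + Finsupp.single l 1 ∉ S}
  have hsplit : {α | mdeg α = t ∧ α ∉ S} =
      {α | mdeg α = t ∧ α ∉ S ∪ {α | 0 < α l}} ∪ (· + Finsupp.single l 1) '' B := by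
    ext α
    simp only [Set.mem_union, Set.mem_image, Set.mem_ofPred_eq, not_or, not_lt, B]
    constructor
    · rintro ⟨hdeg, hα⟩
      rcases Nat.eq_zero_or_pos (α l) with h0 | hpos
      · exact Or.inl ⟨hdeg, hα, h0.le⟩
      · obtain ⟨β, rfl⟩ : ∃ β, α = β + Finsupp.single l 1 :=
          ⟨_, (tsub_add_cancel_of_le (Finsupp.single_le_iff.mpr hpos)).symm⟩
        exact Or.inr ⟨β, ⟨by simpa [mdeg_eq_degree] using hdeg, hα⟩, rfl⟩
    · rintro (⟨hdeg, hα, -⟩ | ⟨β, ⟨hdeg, hβ⟩, rfl⟩)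
      · exact ⟨hdeg, hα⟩
      · exact ⟨by simpa [mdeg_eq_degree] using hdeg, hβ⟩
  have hdisj : Disjoint {α | mdeg α = t ∧ α ∉ S ∪ {α | 0 < α l}}
      ((· + Finsupp.single l 1) '' B) := by
    rw [Set.disjoint_left]
    rintro _ ⟨-, hα⟩ ⟨β, -, rfl⟩
    exact hα (Or.inr (by simp))
  have hBfin : B.Finite := (Finsupp.finite_of_degree_le t).subset fun β (hβ : β ∈ B) =>
    show mdeg β ≤ t by have := hβ.1; omega
  rw [hilbC, hilbC, hsplit, Set.ncard_union_eq hdisj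
      ((Finsupp.finite_of_degree_le t).subset fun α hα => hα.1.le) (hBfin.image _),
    Set.ncard_image_of_injective _ (add_left_injective _)]

lemma ncard_setOf_mdeg_add_one_eq {n : ℕ} (S : Set (Fin n →₀ ℕ)) (t : ℕ) :
    {β : Fin n →₀ ℕ | mdeg β + 1 = t ∧ β ∉ S}.ncard = if t = 0 then 0 else hilbC S (t - 1) := by
  rcases t with _ | t
  · simp
  · simp [hilbC]

lemma IsAlmostRevLex.single_mem_of_add_single_mem {n : ℕ} {S : Set (Fin n →₀ ℕ)}
    (hS : IsAlmostRevLex S) {l i : Fin n} (hl : IsTop l) (hi : i ≠ l) {α : Fin n →₀ ℕ}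
    (hα : α ∉ S) (hαl : α + Finsupp.single l 1 ∈ S) : Finsupp.single i (mdeg α + 1) ∈ S := by
  obtain ⟨β, hβS, hβle⟩ := exists_minGen_le hαl
  have hβl : 0 < β l := by
    refine Nat.pos_of_ne_zero fun h0 => hα (hS.1.isUpperSet (fun j => ?_) hβS.1)
    rcases eq_or_ne j l with rfl | hj
    · simp [h0]
    · simpa [Finsupp.single_apply, hj.symm] using hβle j
  have hpow : Finsupp.single i (mdeg β) ∈ S := by
    refine hS.2 β hβS _ (by simp [mdeg_eq_degree]) (Or.inr ⟨by simp [mdeg_eq_degree], l, ?_, ?_⟩)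
    · simpa [Finsupp.single_apply, hi] using hβl
    · exact fun j hj => absurd (hl j) (not_le.mpr hj)
  have hdeg : mdeg β ≤ mdeg α + 1 := by
    simpa [mdeg_eq_degree] using Finsupp.degree_mono hβle
  exact hS.1.isUpperSet (Finsupp.single_mono hdeg) hpow

lemma IsAlmostRevLex.add_single_notMem {n : ℕ} {S : Set (Fin n →₀ ℕ)} (hS : IsAlmostRevLex S)
    {l i : Fin n} (hl : IsTop l) (hi : i ≠ l) {r : ℕ}
    (hr : ∀ t, Finsupp.single i (t + 1) ∈ S → r ≤ t) {α : Fin n →₀ ℕ} (hα : α ∉ S)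
    (hdeg : mdeg α < r) : α + Finsupp.single l 1 ∉ S := fun h =>
  hdeg.not_ge (hr _ (hS.single_mem_of_add_single_mem hl hi hα h))

/-- Let `J ⊂ K[x_1,…,x_n]` be an Artinian almost revlex monomial ideal (monomial set `S`),
`H` the Hilbert function of `R/J`, and `r_1 = min{t : x_{n-1}^{t+1} ∈ J}`.  Then for every
`t ≤ r_1` multiplication by `x_n` is injective from `(R/J)_{t-1}` to `(R/J)_t` (i.e. `x_n` is
not a zero-divisor on `(R/J)_t`), and consequently the Hilbert function of `R/(J+(x_n))`
equals `ΔH(t) = H(t) - H(t-1)` for all `t ≤ r_1`. -/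
theorem xn_nzd_and_deltaH (K : Type*) [Field K] {n : ℕ} (hn : 2 ≤ n)
    (S : Set (Fin n →₀ ℕ)) (hS : IsAlmostRevLex S)
    (I : Ideal (MvPolynomial (Fin n) K))
    (hI : I = Ideal.span ((fun α => (monomial α (1 : K))) '' S))
    (r1 : ℕ)
    (hr1 : Finsupp.single (⟨n - 2, by omega⟩ : Fin n) (r1 + 1) ∈ S ∧
      ∀ t, Finsupp.single (⟨n - 2, by omega⟩ : Fin n) (t + 1) ∈ S → r1 ≤ t) :
    (∀ t, 1 ≤ t → t ≤ r1 →
      ∀ g ∈ homogeneousSubmodule (Fin n) K (t - 1),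
        X (⟨n - 1, by omega⟩ : Fin n) * g ∈ I → g ∈ I) ∧
    (∀ t, t ≤ r1 →
      (hilbQ K n (I ⊔ Ideal.span {X (⟨n - 1, by omega⟩ : Fin n)}) t : ℤ) =
        (hilbQ K n I t : ℤ) - (if t = 0 then 0 else (hilbQ K n I (t - 1) : ℤ))) := by
  subst hI
  set l : Fin n := ⟨n - 1, by omega⟩
  have hl : IsTop l := fun j => Fin.le_def.mpr (by simp only [l]; omega)
  have hstd : ∀ {α}, α ∉ S → mdeg α < r1 → α + Finsupp.single l 1 ∉ S :=
    hS.add_single_notMem hl (by simp [l, Fin.ext_iff]; omega) hr1.2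
  refine ⟨fun t ht1 htr g hg => hS.1.mem_of_X_mul_mem fun m hm => not_imp_not.mp fun hmS =>
    hstd hmS (by rw [mdeg_of_mem_support hg hm]; omega), fun t htr => ?_⟩
  have hB : {β | mdeg β + 1 = t ∧ β + Finsupp.single l 1 ∉ S} = {β | mdeg β + 1 = t ∧ β ∉ S} :=
    Set.ext fun β => and_congr_right fun hβ =>
      ⟨fun h hβS => h (hS.1.isUpperSet le_self_add hβS), fun h => hstd h (by omega)⟩
  rw [span_monomial_sup_span_X, hilbQ_span_monomial K (hS.1.union (IsMonIdeal.setOf_pos l)),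
    hilbQ_span_monomial K hS.1, hilbQ_span_monomial K hS.1, hilbC_eq_hilbC_union_add_ncard S l t,
    hB, ncard_setOf_mdeg_add_one_eq]
  split_ifs <;> push_cast <;> ring
end
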